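/- For positive reals a, d and the function SEE(t) = log₂(1 + a t/d) / (μ t + P) with μ, P > 0 defined for t ≥ 0, there exists t* ≥ 0 such that SEE is nondecreasing on [0, t*] and nonincreasing on [t*, ∞); i.e., SEE is unimodal. Consequently, for any T ≥ t*, the maximizer of SEE over [0, T] equals t*, independent of T. -/

import Mathlib

/-!
Write `F t = log (1 + c t) / (μ t + P)`. The numerator of `F'` is
`g t = c (μ t + P) - μ (1 + c t) log (1 + c t)`, whose own derivative `-μ c log (1 + c t)` is
nonpositive for `t ≥ 0`; so `g` is antitone, and it becomes negative since `t log t` outgrows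
any linear function. Hence `F` increases up to the point where `g` changes sign and decreases
after it.
-/

open Real Set

section SignChange

variable {g : ℝ → ℝ} {a : ℝ}

lemma AntitoneOn.exists_pos_Ico_nonpos_Ioi (hg : AntitoneOn g (Ici a))
    (hs : ∃ s, a ≤ s ∧ g s ≤ 0) :
    ∃ t₀, a ≤ t₀ ∧ (∀ t ∈ Ico a t₀, 0 < g t) ∧ ∀ t ∈ Ioi t₀, g t ≤ 0 := by
  set S := {t | a ≤ t ∧ g t ≤ 0}
  have hS : S.Nonempty := hs
  have hSbdd : BddBelow S := ⟨a, fun _ ht => ht.1⟩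
  refine ⟨sInf S, le_csInf hS fun _ ht => ht.1, fun t ht => ?_, fun t ht => ?_⟩
  · by_contra! hgt
    exact (csInf_le hSbdd ⟨ht.1, hgt⟩).not_gt ht.2
  · obtain ⟨s, ⟨has, hgs⟩, hst⟩ := exists_lt_of_csInf_lt hS ht
    exact (hg has (has.trans hst.le) hst.le).trans hgs

variable {F F' : ℝ → ℝ}

theorem exists_monotoneOn_Icc_antitoneOn_Ici_of_hasDerivAt
    (hF : ∀ t ∈ Ici a, HasDerivAt F (F' t) t) (hg : AntitoneOn g (Ici a))
    (hs : ∃ s, a ≤ s ∧ g s ≤ 0) (hpos : ∀ t ∈ Ioi a, 0 < g t → 0 ≤ F' t)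
    (hnonpos : ∀ t ∈ Ioi a, g t ≤ 0 → F' t ≤ 0) :
    ∃ t₀, a ≤ t₀ ∧ MonotoneOn F (Icc a t₀) ∧ AntitoneOn F (Ici t₀) := by
  obtain ⟨t₀, hat₀, hgpos, hgnonpos⟩ := hg.exists_pos_Ico_nonpos_Ioi hs
  have hFcont : ContinuousOn F (Ici a) := fun t ht => (hF t ht).continuousAt.continuousWithinAt
  have hF' : ∀ s, ∀ t ∈ Ioi a, HasDerivWithinAt F (F' t) s t :=
    fun s t ht => (hF t (mem_Ici_of_Ioi ht)).hasDerivWithinAt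
  refine ⟨t₀, hat₀, ?_, ?_⟩
  · refine monotoneOn_of_hasDerivWithinAt_nonneg (convex_Icc a t₀)
      (hFcont.mono Icc_subset_Ici_self) (fun t ht => hF' _ t ?_) fun t ht => ?_ <;>
      rw [interior_Icc] at ht
    · exact ht.1
    · exact hpos t ht.1 (hgpos t ⟨ht.1.le, ht.2⟩)
  · have ht₀a : Ioi t₀ ⊆ Ioi a := Ioi_subset_Ioi hat₀
    refine antitoneOn_of_hasDerivWithinAt_nonpos (convex_Ici t₀)
      (hFcont.mono (Ici_subset_Ici.mpr hat₀)) (fun t ht => hF' _ t ?_) fun t ht => ?_ <;>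
      rw [interior_Ici] at ht
    · exact ht₀a ht
    · exact hnonpos t (ht₀a ht) (hgnonpos t ht)

end SignChange

section LogOverAffine

variable {c μ P : ℝ}

lemma hasDerivAt_log_one_add_mul_div_affine {t : ℝ} (ht : 1 + c * t ≠ 0)
    (hden : μ * t + P ≠ 0) :
    HasDerivAt (fun t => log (1 + c * t) / (μ * t + P))
      ((c * (μ * t + P) - μ * ((1 + c * t) * log (1 + c * t))) /
        ((1 + c * t) * (μ * t + P) ^ 2)) t := by
  have hlin : ∀ m q : ℝ, HasDerivAt (fun t => m * t + q) m t := fun m q => by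
    simpa using ((hasDerivAt_id t).const_mul m).add_const q
  have hnum : HasDerivAt (fun t => log (1 + c * t)) (c / (1 + c * t)) t := by
    simpa only [add_comm] using (hlin c 1).log (by simpa [add_comm] using ht)
  refine (hnum.div (hlin μ P) hden).congr_deriv ?_
  field_simp

lemma hasDerivAt_mul_affine_sub_mul_mul_log {t : ℝ} (ht : 1 + c * t ≠ 0) :
    HasDerivAt (fun t => c * (μ * t + P) - μ * ((1 + c * t) * log (1 + c * t)))
      (-(μ * c * log (1 + c * t))) t := by
  have hlin : HasDerivAt (fun t => 1 + c * t) c t := by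
    simpa using ((hasDerivAt_id t).const_mul c).const_add 1
  have haffine : HasDerivAt (fun t => c * (μ * t + P)) (c * μ) t := by
    simpa using (((hasDerivAt_id t).const_mul μ).add_const P).const_mul c
  refine (haffine.sub (((hasDerivAt_mul_log ht).comp t hlin).const_mul μ)).congr_deriv ?_
  ring

lemma antitoneOn_mul_affine_sub_mul_mul_log (hc : 0 ≤ c) (hμ : 0 ≤ μ) :
    AntitoneOn (fun t => c * (μ * t + P) - μ * ((1 + c * t) * log (1 + c * t))) (Ici 0) := by
  have hderiv : ∀ t ∈ Ici (0 : ℝ), HasDerivAt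
      (fun t => c * (μ * t + P) - μ * ((1 + c * t) * log (1 + c * t)))
      (-(μ * c * log (1 + c * t))) t := fun t ht =>
    hasDerivAt_mul_affine_sub_mul_mul_log (add_pos_of_pos_of_nonneg one_pos (mul_nonneg hc ht)).ne'
  refine antitoneOn_of_hasDerivWithinAt_nonpos (convex_Ici 0)
    (fun t ht => (hderiv t ht).continuousAt.continuousWithinAt)
    (fun t ht => (hderiv t (interior_subset ht)).hasDerivWithinAt) fun t ht => ?_
  have hlog : 0 ≤ log (1 + c * t) :=
    log_nonneg (le_add_of_nonneg_right (mul_nonneg hc (interior_subset ht)))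
  simpa using mul_nonneg (mul_nonneg hμ hc) hlog

-- At `1 + c s = exp (1 + c P / μ)` the expression equals `c P (1 - exp (1 + c P / μ)) - μ`.
lemma exists_mul_affine_sub_mul_mul_log_nonpos (hc : 0 < c) (hμ : 0 < μ) (hP : 0 ≤ P) :
    ∃ s, 0 ≤ s ∧ c * (μ * s + P) - μ * ((1 + c * s) * log (1 + c * s)) ≤ 0 := by
  set u := exp (1 + c * P / μ)
  have hu : 1 ≤ u := one_le_exp (by positivity)
  refine ⟨(u - 1) / c, div_nonneg (by linarith) hc.le, ?_⟩
  have hcs : 1 + c * ((u - 1) / c) = u := by field_simp; ring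
  rw [hcs, log_exp]
  field_simp
  nlinarith [mul_nonneg (mul_nonneg hc.le hP) (sub_nonneg.mpr hu)]

theorem exists_monotoneOn_Icc_antitoneOn_Ici_log_one_add_mul_div_affine
    (hc : 0 < c) (hμ : 0 < μ) (hP : 0 < P) :
    ∃ t₀, 0 ≤ t₀ ∧ MonotoneOn (fun t => log (1 + c * t) / (μ * t + P)) (Icc 0 t₀) ∧
      AntitoneOn (fun t => log (1 + c * t) / (μ * t + P)) (Ici t₀) := by
  have hnum : ∀ t ∈ Ici (0 : ℝ), 0 < 1 + c * t := fun t ht =>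
    add_pos_of_pos_of_nonneg one_pos (mul_nonneg hc.le ht)
  have hden : ∀ t ∈ Ici (0 : ℝ), 0 < μ * t + P := fun t ht =>
    add_pos_of_nonneg_of_pos (mul_nonneg hμ.le ht) hP
  have hweight : ∀ t ∈ Ioi (0 : ℝ), 0 ≤ (1 + c * t) * (μ * t + P) ^ 2 := fun t ht =>
    (mul_pos (hnum t (mem_Ici_of_Ioi ht)) (pow_pos (hden t (mem_Ici_of_Ioi ht)) 2)).le
  exact exists_monotoneOn_Icc_antitoneOn_Ici_of_hasDerivAt
    (fun t ht => hasDerivAt_log_one_add_mul_div_affine (hnum t ht).ne' (hden t ht).ne')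
    (antitoneOn_mul_affine_sub_mul_mul_log hc.le hμ.le)
    (exists_mul_affine_sub_mul_mul_log_nonpos hc hμ hP.le)
    (fun t ht hg => div_nonneg hg.le (hweight t ht))
    (fun t ht hg => div_nonpos_of_nonpos_of_nonneg hg (hweight t ht))

theorem exists_monotoneOn_Icc_antitoneOn_Ici_logb_one_add_mul_div_affine {b : ℝ} (hb : 1 < b)
    (hc : 0 < c) (hμ : 0 < μ) (hP : 0 < P) :
    ∃ t₀, 0 ≤ t₀ ∧ MonotoneOn (fun t => logb b (1 + c * t) / (μ * t + P)) (Icc 0 t₀) ∧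
      AntitoneOn (fun t => logb b (1 + c * t) / (μ * t + P)) (Ici t₀) := by
  obtain ⟨t₀, ht₀, hmono, hanti⟩ :=
    exists_monotoneOn_Icc_antitoneOn_Ici_log_one_add_mul_div_affine hc hμ hP
  have hdiv : Monotone (· / log b) := monotone_div_right_of_nonneg (log_pos hb).le
  have hF : (fun t => logb b (1 + c * t) / (μ * t + P)) =
      (· / log b) ∘ fun t => log (1 + c * t) / (μ * t + P) := by
    ext t
    simp only [Function.comp_apply, logb, div_right_comm]
  rw [hF]
  exact ⟨t₀, ht₀, hdiv.comp_monotoneOn hmono, hdiv.comp_antitoneOn hanti⟩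

end LogOverAffine

theorem see_unimodal (a d μ P : ℝ) (ha : 0 < a) (hd : 0 < d) (hμ : 0 < μ) (hP : 0 < P) :
    ∃ tstar : ℝ, 0 ≤ tstar ∧
      MonotoneOn (fun t => logb 2 (1 + a * t / d) / (μ * t + P)) (Set.Icc 0 tstar) ∧
      AntitoneOn (fun t => logb 2 (1 + a * t / d) / (μ * t + P)) (Set.Ici tstar) ∧
      ∀ T, tstar ≤ T →
        IsMaxOn (fun t => logb 2 (1 + a * t / d) / (μ * t + P)) (Set.Icc 0 T) tstar := by
  simp only [mul_div_right_comm a _ d]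
  obtain ⟨tstar, htstar, hmono, hanti⟩ :=
    exists_monotoneOn_Icc_antitoneOn_Ici_logb_one_add_mul_div_affine one_lt_two (div_pos ha hd)
      hμ hP
  exact ⟨tstar, htstar, hmono, hanti, fun _ _ =>
    (isMaxOn_Ici_of_mono_anti hmono hanti).on_subset Icc_subset_Ici_self⟩
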